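/- arXiv:2301.02517 — 5 statements merged into one kernel-verified Lean document; each statement's English description precedes it below -/
import Mathlib

section
/- The Laplacian of an N-colored Adinkra satisfies L² = 2N·L - (N² - N)·I; equivalently, its only eigenvalues are N + √N and N - √N. -/
open Matrix

/-- An `N`-colored Adinkra structure on a vertex set `V`: `nbr c u` is the unique
neighbor of `u` along the edge of color `c`, and `σ u w ∈ {±1}` is the sign of the
edge `uw`. The axioms say: each color class is a perfect matching (so every vertex
is incident to exactly one edge of each color, and the graph is simple), the graph
is bipartite and connected, every bi-colored subgraph is a disjoint union of
4-cycles, and every bi-colored 4-cycle has an odd number of negative edges. -/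
structure IsAdinkra {V : Type} [Fintype V] [DecidableEq V] (N : ℕ)
    (nbr : Fin N → V → V) (σ : V → V → ℤ) : Prop where
  invol : ∀ c u, nbr c (nbr c u) = u
  ne : ∀ c u, nbr c u ≠ u
  distinct : ∀ c c' u, c ≠ c' → nbr c u ≠ nbr c' u
  symm : ∀ u w, σ u w = σ w u
  sign_unit : ∀ u w, σ u w = 1 ∨ σ u w = -1
  bipartite : ∃ p : V → ZMod 2, ∀ c u, p (nbr c u) ≠ p u
  connected : (SimpleGraph.fromRel fun u w => ∃ c, nbr c u = w).Connected
  fourCycle : ∀ c c', c ≠ c' → ∀ u, nbr c (nbr c' (nbr c (nbr c' u))) = u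
  oddSign : ∀ c c', c ≠ c' → ∀ u,
    σ u (nbr c' u) * σ (nbr c' u) (nbr c (nbr c' u)) *
      σ (nbr c (nbr c' u)) (nbr c' (nbr c (nbr c' u))) *
      σ (nbr c' (nbr c (nbr c' u))) u = -1

/-- The signed adjacency matrix of an Adinkra. -/
def adinkraAdj {V : Type} [Fintype V] [DecidableEq V] {N : ℕ}
    (nbr : Fin N → V → V) (σ : V → V → ℤ) : Matrix V V ℤ :=
  Matrix.of fun u w => if ∃ c, nbr c u = w then σ u w else 0

/-- The signed Laplacian `L(𝒜) = N·I - A_σ` of an Adinkra. -/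
def adinkraLap {V : Type} [Fintype V] [DecidableEq V] {N : ℕ}
    (nbr : Fin N → V → V) (σ : V → V → ℤ) : Matrix V V ℤ :=
  (N : ℤ) • (1 : Matrix V V ℤ) - adinkraAdj nbr σ

section Aux
variable {V : Type} [Fintype V] [DecidableEq V] {N : ℕ}
  {nbr : Fin N → V → V} {σ : V → V → ℤ}

lemma IsAdinkra.color_inj (hA : IsAdinkra N nbr σ) {c c' : Fin N} {u : V}
    (h : nbr c u = nbr c' u) : c = c' := by
  by_contra hcc
  exact hA.distinct c c' u hcc h

lemma IsAdinkra.swap (hA : IsAdinkra N nbr σ) {c c' : Fin N} (h : c ≠ c') (u : V) :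
    nbr c (nbr c' u) = nbr c' (nbr c u) := by
  have h4 := hA.fourCycle c c' h u
  have h1 := congrArg (nbr c) h4
  rw [hA.invol] at h1
  have h2 := congrArg (nbr c') h1
  rw [hA.invol] at h2
  exact h2

lemma IsAdinkra.sq_one (hA : IsAdinkra N nbr σ) (u w : V) : σ u w * σ u w = 1 := by
  rcases hA.sign_unit u w with h | h <;> rw [h] <;> norm_num

/-- The signed adjacency matrix of an Adinkra squares to `N • 1`. -/
lemma adinkraAdj_mul_self (hA : IsAdinkra N nbr σ) :
    adinkraAdj nbr σ * adinkraAdj nbr σ = (N : ℤ) • (1 : Matrix V V ℤ) := by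
  ext u w
  rw [mul_apply]
  have hrow : ∀ v : V, adinkraAdj nbr σ u v * adinkraAdj nbr σ v w =
      ∑ c : Fin N, if nbr c u = v then σ u (nbr c u) * adinkraAdj nbr σ (nbr c u) w else 0 := by
    intro v
    by_cases hv : ∃ c, nbr c u = v
    · obtain ⟨c, hc⟩ := hv
      rw [Finset.sum_eq_single c]
      · simp only [hc, if_pos rfl]
        congr 1
        show (if ∃ c, nbr c u = v then σ u v else 0) = σ u v
        rw [if_pos ⟨c, hc⟩]
      · intro b _ hb
        rw [if_neg]
        intro hbv
        exact hb (hA.color_inj (hbv.trans hc.symm))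
      · intro h; exact absurd (Finset.mem_univ c) h
    · have h0 : adinkraAdj nbr σ u v = 0 := by
        show (if ∃ c, nbr c u = v then σ u v else 0) = 0
        rw [if_neg hv]
      rw [h0, zero_mul]
      symm
      apply Finset.sum_eq_zero
      intro c _
      rw [if_neg fun hc => hv ⟨c, hc⟩]
  rw [Finset.sum_congr rfl fun v _ => hrow v, Finset.sum_comm]
  have hsum : ∀ c : Fin N,
      (∑ v : V, if nbr c u = v then σ u (nbr c u) * adinkraAdj nbr σ (nbr c u) w else 0) =
      σ u (nbr c u) * adinkraAdj nbr σ (nbr c u) w := by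
    intro c
    rw [Finset.sum_ite_eq, if_pos (Finset.mem_univ _)]
  rw [Finset.sum_congr rfl fun c _ => hsum c]
  by_cases huw : w = u
  · subst huw
    have hdiag : ∀ c : Fin N, σ w (nbr c w) * adinkraAdj nbr σ (nbr c w) w = 1 := by
      intro c
      have hAe : adinkraAdj nbr σ (nbr c w) w = σ w (nbr c w) := by
        show (if ∃ c', nbr c' (nbr c w) = w then σ (nbr c w) w else 0) = σ w (nbr c w)
        rw [if_pos ⟨c, hA.invol c w⟩, hA.symm]
      rw [hAe, hA.sq_one]
    rw [Finset.sum_congr rfl fun c _ => hdiag c]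
    simp [Matrix.one_apply]
  · have hone : ((N : ℤ) • (1 : Matrix V V ℤ)) u w = 0 := by
      simp [Matrix.one_apply, Ne.symm huw]
    rw [hone]
    set f : Fin N → ℤ := fun c => σ u (nbr c u) * adinkraAdj nbr σ (nbr c u) w with hf
    show ∑ c : Fin N, f c = 0
    -- pairing: `c` pairs with the unique `c'` such that `nbr c' (nbr c u) = w`
    have key : ∀ c c' : Fin N, nbr c' (nbr c u) = w → f c + f c' = 0 := by
      intro c c' hcc'
      have hne : c ≠ c' := by
        rintro rfl
        exact huw ((hA.invol c u ▸ hcc').symm)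
      set x := nbr c u with hx
      set y := nbr c' u with hy
      have hyw : nbr c y = w := (hA.swap hne u).trans hcc'
      have hAx : adinkraAdj nbr σ x w = σ x w := by
        show (if ∃ c'', nbr c'' x = w then σ x w else 0) = σ x w
        rw [if_pos ⟨c', hcc'⟩]
      have hAy : adinkraAdj nbr σ y w = σ y w := by
        show (if ∃ c'', nbr c'' y = w then σ y w else 0) = σ y w
        rw [if_pos ⟨c, hyw⟩]
      have hodd := hA.oddSign c c' hne u
      have hcw : nbr c' w = x := by rw [← hcc', hA.invol]
      rw [show nbr c (nbr c' u) = w from hyw, hcw, ← hy] at hodd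
      -- hodd : σ u y * σ y w * σ w x * σ x u = -1
      have hmul : f c * f c' = -1 := by
        simp only [hf, ← hx, ← hy, hAx, hAy]
        rw [hA.symm u x, hA.symm x w, ← hodd]
        ring
      have hfc2 : f c * f c = 1 := by
        simp only [hf, ← hx, hAx]
        have a1 := hA.sq_one u x
        have a2 := hA.sq_one x w
        linear_combination (σ x w * σ x w) * a1 + a2
      linear_combination f c * hmul - f c' * hfc2
    classical
    apply Finset.sum_ninvolution
      (fun c => if h : ∃ c', nbr c' (nbr c u) = w then h.choose else c)
    · intro c
      by_cases h : ∃ c', nbr c' (nbr c u) = w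
      · simp only [dif_pos h]
        exact key c h.choose h.choose_spec
      · rw [dif_neg h]
        have : f c = 0 := by
          have hA0 : adinkraAdj nbr σ (nbr c u) w = 0 := by
            show (if ∃ c', nbr c' (nbr c u) = w then σ (nbr c u) w else 0) = 0
            rw [if_neg h]
          simp [hf, hA0]
        rw [this]; ring
    · intro c hfc
      by_cases h : ∃ c', nbr c' (nbr c u) = w
      · simp only [dif_pos h]
        intro hcc
        apply huw
        rw [← h.choose_spec, hcc, hA.invol]
      · exfalso
        apply hfc
        have hA0 : adinkraAdj nbr σ (nbr c u) w = 0 := by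
          show (if ∃ c', nbr c' (nbr c u) = w then σ (nbr c u) w else 0) = 0
          rw [if_neg h]
        simp [hf, hA0]
    · intro c; exact Finset.mem_univ _
    · intro c
      by_cases h : ∃ c', nbr c' (nbr c u) = w
      · rw [dif_pos h]
        have hcc' : nbr h.choose (nbr c u) = w := h.choose_spec
        have hne : c ≠ h.choose := by
          intro hcc
          apply huw
          rw [← hcc', ← hcc, hA.invol]
        have h' : ∃ c'', nbr c'' (nbr h.choose u) = w :=
          ⟨c, (hA.swap hne u).trans hcc'⟩
        rw [dif_pos h']
        exact hA.color_inj (h'.choose_spec.trans ((hA.swap hne u).trans hcc').symm)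
      · rw [dif_neg h, dif_neg h]

end Aux

/-- The Laplacian of an `N`-colored Adinkra satisfies `L² = 2N·L - (N² - N)·I`
(equivalently, its only eigenvalues are `N + √N` and `N - √N`). -/
theorem adinkra_laplacian_quadratic {V : Type} [Fintype V] [DecidableEq V]
    {N : ℕ} (hN : 2 ≤ N) (nbr : Fin N → V → V) (σ : V → V → ℤ)
    (hA : IsAdinkra N nbr σ) :
    adinkraLap nbr σ * adinkraLap nbr σ =
      (2 * N : ℤ) • adinkraLap nbr σ -
        ((N : ℤ) ^ 2 - N) • (1 : Matrix V V ℤ) := by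
  have hAA := adinkraAdj_mul_self hA
  unfold adinkraLap
  rw [sub_mul, mul_sub, mul_sub, hAA, smul_mul_assoc, one_mul, smul_mul_assoc, one_mul,
    mul_smul_comm, mul_one]
  module
end

section
/- For an N-colored Adinkra on v vertices, the two eigenvalues N ± √N of the Laplacian each have multiplicity v/2, and consequently det L(𝒜) = (N² - N)^{v/2}; in particular v is even and the cokernel of L(𝒜) is a finite group of order (N² - N)^{v/2}. -/
open Matrix

namespace IsAdinkra
variable {V : Type} [Fintype V] [DecidableEq V] {N : ℕ}
    {nbr : Fin N → V → V} {σ : V → V → ℤ}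

lemma commute_nbr (hA : IsAdinkra N nbr σ) (c c' : Fin N) (u : V) :
    nbr c (nbr c' u) = nbr c' (nbr c u) := by
  by_cases h : c = c'
  · subst h; rfl
  · have h4 := congrArg (nbr c') (congrArg (nbr c) (hA.fourCycle c c' h u))
    rwa [hA.invol, hA.invol] at h4

lemma sq_sign (hA : IsAdinkra N nbr σ) (u w : V) : σ u w * σ u w = 1 := by
  rcases hA.sign_unit u w with h | h <;> rw [h] <;> norm_num

lemma adj_symm (hA : IsAdinkra N nbr σ) : (adinkraAdj nbr σ)ᵀ = adinkraAdj nbr σ := by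
  ext u w
  simp only [transpose_apply, adinkraAdj, of_apply]
  have hiff : (∃ c, nbr c w = u) ↔ ∃ c, nbr c u = w := by
    constructor <;> rintro ⟨c, rfl⟩ <;> exact ⟨c, hA.invol c _⟩
  by_cases h : ∃ c, nbr c u = w
  · rw [if_pos (hiff.mpr h), if_pos h, hA.symm]
  · rw [if_neg (fun hc => h (hiff.mp hc)), if_neg h]

lemma adj_sq (hA : IsAdinkra N nbr σ) :
    adinkraAdj nbr σ * adinkraAdj nbr σ = (N : ℤ) • (1 : Matrix V V ℤ) := by
  ext u w
  rw [Matrix.mul_apply]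
  have hinj : ∀ c ∈ (Finset.univ : Finset (Fin N)), ∀ c' ∈ Finset.univ,
      nbr c u = nbr c' u → c = c' := by
    intro c _ c' _ h
    by_contra hne
    exact hA.distinct c c' u hne h
  have hre : ∑ x, adinkraAdj nbr σ u x * adinkraAdj nbr σ x w
      = ∑ c, σ u (nbr c u) * adinkraAdj nbr σ (nbr c u) w := by
    calc ∑ x, adinkraAdj nbr σ u x * adinkraAdj nbr σ x w
        = ∑ x ∈ Finset.univ.image (fun c => nbr c u),
            adinkraAdj nbr σ u x * adinkraAdj nbr σ x w := by
          refine (Finset.sum_subset (Finset.subset_univ _) ?_).symm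
          intro x _ hx
          rw [Finset.mem_image] at hx
          have hne : ¬ ∃ c, nbr c u = x := by
            rintro ⟨c, hc⟩; exact hx ⟨c, Finset.mem_univ c, hc⟩
          simp [adinkraAdj, hne]
      _ = ∑ c, adinkraAdj nbr σ u (nbr c u) * adinkraAdj nbr σ (nbr c u) w :=
          Finset.sum_image hinj
      _ = ∑ c, σ u (nbr c u) * adinkraAdj nbr σ (nbr c u) w := by
          apply Finset.sum_congr rfl
          intro c _
          congr 1
          simp only [adinkraAdj, of_apply]
          exact if_pos ⟨c, rfl⟩
  rw [hre]
  by_cases huw : u = w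
  · subst huw
    have : ∀ c : Fin N, σ u (nbr c u) * adinkraAdj nbr σ (nbr c u) u = 1 := by
      intro c
      have h1 : adinkraAdj nbr σ (nbr c u) u = σ (nbr c u) u := by
        simp only [adinkraAdj, of_apply]
        exact if_pos ⟨c, hA.invol c u⟩
      rw [h1, ← hA.symm u (nbr c u), hA.sq_sign]
    rw [Finset.sum_congr rfl (fun c _ => this c)]
    simp
  · have hrhs : ((N : ℤ) • (1 : Matrix V V ℤ)) u w = 0 := by
      simp [one_apply_ne huw]
    rw [hrhs]
    have key : ∀ c : Fin N, ∀ _ : (∃ c', nbr c' (nbr c u) = w),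
        σ u (nbr c u) * adinkraAdj nbr σ (nbr c u) w
          = σ u (nbr c u) * σ (nbr c u) w := by
      intro c h
      simp only [adinkraAdj, of_apply]
      rw [if_pos h]
    have keyn : ∀ c : Fin N, ¬ (∃ c', nbr c' (nbr c u) = w) →
        σ u (nbr c u) * adinkraAdj nbr σ (nbr c u) w = 0 := by
      intro c h
      simp only [adinkraAdj, of_apply]
      rw [if_neg h, mul_zero]
    refine Finset.sum_involution
      (fun c _ => if h : ∃ c', nbr c' (nbr c u) = w then h.choose else c)
      (fun c _ => ?_) (fun c _ hfc => ?_) (fun c _ => Finset.mem_univ _) (fun c _ => ?_)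
    · by_cases h : ∃ c', nbr c' (nbr c u) = w
      · simp only [dif_pos h]
        set c1 := h.choose with hc1def
        have hc1 : nbr c1 (nbr c u) = w := h.choose_spec
        have hcc1 : c ≠ c1 := by
          intro heq
          apply huw
          rw [← hc1, ← heq, hA.invol]
        have hw2 : nbr c (nbr c1 u) = w := by rw [hA.commute_nbr, hc1]
        have hfc : σ u (nbr c u) * adinkraAdj nbr σ (nbr c u) w
            = σ u (nbr c u) * σ (nbr c u) w := key c h
        have hfc1 : σ u (nbr c1 u) * adinkraAdj nbr σ (nbr c1 u) w
            = σ u (nbr c1 u) * σ (nbr c1 u) w := key c1 ⟨c, hw2⟩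
        rw [hfc, hfc1]
        have hodd := hA.oddSign c c1 hcc1 u
        rw [hw2] at hodd
        have hback : nbr c1 w = nbr c u := by rw [← hc1, hA.invol]
        rw [hback] at hodd
        rw [hA.symm w (nbr c u), hA.symm (nbr c u) u] at hodd
        have a1 := hA.sq_sign u (nbr c u)
        have a2 := hA.sq_sign (nbr c u) w
        linear_combination (σ u (nbr c u) * σ (nbr c u) w) * hodd
          - (σ u (nbr c1 u) * σ (nbr c1 u) w * (σ (nbr c u) w * σ (nbr c u) w)) * a1
          - (σ u (nbr c1 u) * σ (nbr c1 u) w) * a2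
      · simp only [dif_neg h]
        rw [keyn c h]
        norm_num
    · by_cases h : ∃ c', nbr c' (nbr c u) = w
      · simp only [dif_pos h]
        intro heq
        have hc1 : nbr h.choose (nbr c u) = w := h.choose_spec
        rw [heq] at hc1
        exact huw (by rw [← hc1, hA.invol])
      · exact absurd (keyn c h) hfc
    · by_cases h : ∃ c', nbr c' (nbr c u) = w
      · simp only [dif_pos h]
        have hc1 : nbr h.choose (nbr c u) = w := h.choose_spec
        have h2 : ∃ c', nbr c' (nbr h.choose u) = w :=
          ⟨c, by rw [hA.commute_nbr, hc1]⟩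
        rw [dif_pos h2]
        have hch : nbr h2.choose (nbr h.choose u) = w := h2.choose_spec
        have hc' : nbr c (nbr h.choose u) = w := by rw [hA.commute_nbr, hc1]
        by_contra hne
        have hd := hA.distinct h2.choose c (nbr h.choose u) hne
        rw [hch, hc'] at hd
        exact hd rfl
      · simp only [dif_neg h]

end IsAdinkra

lemma card_coker_eq_natAbs_det {V : Type} [Fintype V] [DecidableEq V]
    (A : Matrix V V ℤ) (hd : A.det ≠ 0) :
    Nat.card ((V → ℤ) ⧸ LinearMap.range A.mulVecLin) = A.det.natAbs := by
  classical
  have hinj : Function.Injective A.mulVecLin := by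
    rw [← LinearMap.ker_eq_bot]
    rw [Submodule.eq_bot_iff]
    intro x hx
    rw [LinearMap.mem_ker, mulVecLin_apply] at hx
    have h2 : A.adjugate *ᵥ (A *ᵥ x) = A.det • x := by
      rw [mulVec_mulVec, adjugate_mul, smul_mulVec, one_mulVec]
    rw [hx, mulVec_zero] at h2
    ext i
    have := congrFun h2.symm i
    simp only [Pi.smul_apply, smul_eq_mul, Pi.zero_apply] at this ⊢
    exact (mul_eq_zero.mp this).resolve_left hd
  set Nsub := LinearMap.range A.mulVecLin with hNsub
  obtain ⟨n, snf⟩ := Nsub.smithNormalForm (Pi.basisFun ℤ V)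
  let e : (V → ℤ) ≃ₗ[ℤ] Nsub := LinearEquiv.ofInjective A.mulVecLin hinj
  have hn : n = Fintype.card V := by
    have h1 : Module.finrank ℤ (V → ℤ) = Fintype.card V := Module.finrank_pi ℤ
    have h2 : Module.finrank ℤ Nsub = n := Module.finrank_eq_card_basis snf.bN |>.trans (by simp)
    rw [← h2, ← h1]
    exact (e.finrank_eq).symm
  -- the index
  have hcard : Nat.card ((V → ℤ) ⧸ Nsub) = ∏ i : Fin n, (snf.a i).natAbs := by
    have : Nat.card ((V → ℤ) ⧸ Nsub) = Nsub.toAddSubgroup.index := rfl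
    rw [this, snf.toAddSubgroup_index_eq_pow_mul_prod,
      show Fintype.card V - n = 0 by omega, pow_zero, one_mul]
    congr 1
    ext i
    rw [Ideal.span_singleton_toAddSubgroup_eq_zmultiples, Int.index_zmultiples]
  -- relate det to the a i
  let eqv : Fin n ≃ V := Equiv.ofBijective snf.f
    ((Fintype.bijective_iff_injective_and_card snf.f).mpr
      ⟨snf.f.injective, by rw [Fintype.card_fin, hn]⟩)
  -- the equiv from SNF bases
  let e2 : (V → ℤ) ≃ₗ[ℤ] Nsub := snf.bM.equiv snf.bN eqv.symm
  have hcomp : Nsub.subtype ∘ₗ (e : (V → ℤ) →ₗ[ℤ] Nsub) = A.mulVecLin := by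
    ext x
    show (LinearEquiv.ofInjective A.mulVecLin hinj (Pi.single x 1) : V → ℤ) _ = _
    rw [LinearEquiv.ofInjective_apply]
    simp [mulVec_single]
  have hassoc : Associated (LinearMap.det (Nsub.subtype ∘ₗ (e : (V → ℤ) →ₗ[ℤ] Nsub)))
      (LinearMap.det (Nsub.subtype ∘ₗ (e2 : (V → ℤ) →ₗ[ℤ] Nsub))) :=
    LinearMap.associated_det_comp_equiv _ _ _
  have hdet1 : LinearMap.det A.mulVecLin = A.det := by
    rw [show A.mulVecLin = Matrix.toLin' A from rfl, LinearMap.det_toLin']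
  -- compute det of the SNF composite
  have hdet2 : LinearMap.det (Nsub.subtype ∘ₗ (e2 : (V → ℤ) →ₗ[ℤ] Nsub)) = ∏ i : Fin n, snf.a i := by
    rw [← LinearMap.det_toMatrix snf.bM]
    have hmat : LinearMap.toMatrix snf.bM snf.bM (Nsub.subtype ∘ₗ (e2 : (V → ℤ) →ₗ[ℤ] Nsub))
        = Matrix.diagonal (fun v => snf.a (eqv.symm v)) := by
      ext i j
      rw [LinearMap.toMatrix_apply]
      have happ : (Nsub.subtype ∘ₗ (e2 : (V → ℤ) →ₗ[ℤ] Nsub)) (snf.bM j)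
          = snf.a (eqv.symm j) • snf.bM j := by
        have h1 : e2 (snf.bM j) = snf.bN (eqv.symm j) := snf.bM.equiv_apply _ _ _
        have h2 : (snf.bN (eqv.symm j) : V → ℤ) = snf.a (eqv.symm j) • snf.bM (snf.f (eqv.symm j)) :=
          snf.snf _
        have h3 : snf.f (eqv.symm j) = j := by
          have h4 := eqv.apply_symm_apply j
          simp only [eqv, Equiv.ofBijective_apply] at h4
          exact h4
        simp only [LinearMap.comp_apply, LinearEquiv.coe_coe, h1, Submodule.coe_subtype]
        rw [h2, h3]
      rw [happ]
      simp only [_root_.map_smul, Finsupp.smul_apply, Module.Basis.repr_self, smul_eq_mul]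
      by_cases hij : i = j
      · subst hij; simp
      · rw [Matrix.diagonal_apply_ne _ (by
          exact fun hc => hij hc), Finsupp.single_apply, if_neg (fun hc => hij hc.symm)]
        ring
    rw [hmat, Matrix.det_diagonal]
    exact Equiv.prod_comp eqv.symm (fun i => snf.a i)
  -- put together
  rw [hcomp, hdet1] at hassoc
  have habs : A.det.natAbs = (∏ i : Fin n, snf.a i).natAbs := by
    rw [← hdet2]
    exact Int.natAbs_eq_iff_associated.mpr hassoc
  rw [hcard, habs]
  exact (map_prod Int.natAbsHom snf.a Finset.univ).symm

section Herm
open Polynomial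
variable {n : Type} [Fintype n] [DecidableEq n]

lemma hermitian_charpoly_eq {A : Matrix n n ℝ} (hA : A.IsHermitian) :
    A.charpoly = ∏ i, (X - C (hA.eigenvalues i)) := by
  classical
  set U : Matrix n n ℝ := (hA.eigenvectorUnitary : Matrix n n ℝ) with hU
  have hsp : A = U * diagonal hA.eigenvalues * star U := by
    have := hA.spectral_theorem
    rwa [RCLike.ofReal_real_eq_id, Function.id_comp] at this
  have hU1 : U * star U = 1 := (Matrix.mem_unitaryGroup_iff).mp hA.eigenvectorUnitary.2
  set D : Matrix n n ℝ := diagonal hA.eigenvalues with hD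
  have hUs : (U.map (C : ℝ → ℝ[X])) * ((star U).map C) = 1 := by
    rw [← Matrix.map_mul, hU1]
    exact Matrix.map_one _ (map_zero C) (map_one C)
  have key : charmatrix A = (U.map (C : ℝ → ℝ[X])) * charmatrix D * ((star U).map C) := by
    simp only [charmatrix]
    rw [mul_sub, sub_mul]
    congr 1
    · have hcomm : U.map (C : ℝ → ℝ[X]) * Matrix.scalar n (X : ℝ[X])
          = Matrix.scalar n (X : ℝ[X]) * U.map C :=
        (Matrix.scalar_commute (X : ℝ[X]) (fun r => Commute.all _ _) _).symm
      rw [hcomm, mul_assoc, hUs, mul_one]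
    · rw [hsp, _root_.map_mul, _root_.map_mul, RingHom.mapMatrix_apply,
        RingHom.mapMatrix_apply, RingHom.mapMatrix_apply]
  have hchD : charmatrix D = diagonal (fun i => (X : ℝ[X]) - C (hA.eigenvalues i)) := by
    ext i j
    by_cases hij : i = j
    · subst hij
      rw [charmatrix_apply_eq, diagonal_apply_eq, hD, diagonal_apply_eq]
    · rw [charmatrix_apply_ne _ _ _ hij, diagonal_apply_ne _ hij, hD, diagonal_apply_ne _ hij,
        map_zero, neg_zero]
  rw [Matrix.charpoly, key, det_mul, det_mul, mul_comm, ← mul_assoc, ← det_mul, ← det_mul]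
  have hU2 : star U * U = 1 := (Matrix.mem_unitaryGroup_iff').mp hA.eigenvectorUnitary.2
  have hUs2 : ((star U).map (C : ℝ → ℝ[X])) * (U.map C) = 1 := by
    rw [← Matrix.map_mul, hU2]
    exact Matrix.map_one _ (map_zero C) (map_one C)
  rw [hUs2, one_mul, hchD, det_diagonal]

lemma hermitian_trace_eq {A : Matrix n n ℝ} (hA : A.IsHermitian) :
    A.trace = ∑ i, hA.eigenvalues i := by
  classical
  have hsp : A = (hA.eigenvectorUnitary : Matrix n n ℝ) * diagonal hA.eigenvalues
      * star (hA.eigenvectorUnitary : Matrix n n ℝ) := by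
    have := hA.spectral_theorem
    rwa [RCLike.ofReal_real_eq_id, Function.id_comp] at this
  have hU2 : star (hA.eigenvectorUnitary : Matrix n n ℝ) * (hA.eigenvectorUnitary : Matrix n n ℝ)
      = 1 := (Matrix.mem_unitaryGroup_iff').mp hA.eigenvectorUnitary.2
  calc A.trace = ((hA.eigenvectorUnitary : Matrix n n ℝ) * diagonal hA.eigenvalues
        * star (hA.eigenvectorUnitary : Matrix n n ℝ)).trace := by rw [← hsp]
    _ = (star (hA.eigenvectorUnitary : Matrix n n ℝ) * (hA.eigenvectorUnitary : Matrix n n ℝ)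
        * diagonal hA.eigenvalues).trace := Matrix.trace_mul_cycle _ _ _
    _ = (diagonal hA.eigenvalues).trace := by rw [hU2, one_mul]
    _ = ∑ i, hA.eigenvalues i := Matrix.trace_diagonal _

end Herm

open Polynomial in
/-- For an `N`-colored Adinkra on `v` vertices, the two eigenvalues `N ± √N` of the
Laplacian each have multiplicity `v/2`; consequently `v` is even,
`det L(𝒜) = (N² - N)^{v/2}`, and `coker L(𝒜)` is a finite group of order `(N² - N)^{v/2}`. -/
theorem adinkra_laplacian_det_and_multiplicities {V : Type} [Fintype V] [DecidableEq V]
    {N : ℕ} (hN : 2 ≤ N) (nbr : Fin N → V → V) (σ : V → V → ℤ)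
    (hA : IsAdinkra N nbr σ) :
    Even (Fintype.card V) ∧
      ((adinkraLap nbr σ).map (Int.cast : ℤ → ℝ)).charpoly =
        (X - C ((N : ℝ) + Real.sqrt N)) ^ (Fintype.card V / 2) *
          (X - C ((N : ℝ) - Real.sqrt N)) ^ (Fintype.card V / 2) ∧
      (adinkraLap nbr σ).det = ((N : ℤ) ^ 2 - N) ^ (Fintype.card V / 2) ∧
      Nat.card ((V → ℤ) ⧸ LinearMap.range (adinkraLap nbr σ).mulVecLin) =
        (N ^ 2 - N) ^ (Fintype.card V / 2) := by
  classical
  set v := Fintype.card V with hv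
  set L : Matrix V V ℤ := adinkraLap nbr σ with hL
  set M : Matrix V V ℝ := L.map (Int.cast : ℤ → ℝ) with hMdef
  set B : Matrix V V ℝ := (adinkraAdj nbr σ).map (Int.cast : ℤ → ℝ) with hBdef
  have hNpos : (0:ℝ) < N := by
    have : 0 < N := by omega
    exact_mod_cast this
  have hsqrtpos : 0 < Real.sqrt N := Real.sqrt_pos.mpr hNpos
  have hsq : Real.sqrt N * Real.sqrt N = N := Real.mul_self_sqrt hNpos.le
  set lp : ℝ := (N : ℝ) + Real.sqrt N with hlp
  set lm : ℝ := (N : ℝ) - Real.sqrt N with hlm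
  have hlpm : lp ≠ lm := by
    simp only [hlp, hlm]
    intro h
    linarith
  -- basic matrix identities
  have hM : M = (N : ℝ) • (1 : Matrix V V ℝ) - B := by
    ext u w
    simp only [hMdef, hBdef, Matrix.map_apply, hL, adinkraLap, Matrix.sub_apply,
      Matrix.smul_apply, Matrix.one_apply, smul_eq_mul]
    by_cases h : u = w <;> simp [h]
  have hB2 : B * B = (N : ℝ) • (1 : Matrix V V ℝ) := by
    have h0 := congrArg (RingHom.mapMatrix (Int.castRingHom ℝ)) hA.adj_sq
    rw [_root_.map_mul] at h0
    have h1 : RingHom.mapMatrix (Int.castRingHom ℝ) (adinkraAdj nbr σ) = B := rfl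
    rw [h1] at h0
    rw [h0]
    ext u w
    simp only [RingHom.mapMatrix_apply, Matrix.map_apply, Matrix.smul_apply, Matrix.one_apply,
      smul_eq_mul]
    by_cases h : u = w <;> simp [h]
  have hMM : M * M = ((2:ℝ) * N) • M + ((N:ℝ) - (N:ℝ)^2) • (1 : Matrix V V ℝ) := by
    rw [hM]
    simp only [sub_mul, mul_sub, smul_mul_assoc, mul_smul_comm, one_mul, mul_one, hB2]
    module
  -- M is symmetric
  have hsym : M.IsHermitian := by
    have hadj := hA.adj_symm
    rw [Matrix.IsHermitian]
    ext u w
    simp only [Matrix.conjTranspose_apply, star_trivial]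
    have : L w u = L u w := by
      simp only [hL, adinkraLap, Matrix.sub_apply, Matrix.smul_apply, Matrix.one_apply,
        smul_eq_mul]
      have h2 : adinkraAdj nbr σ w u = adinkraAdj nbr σ u w :=
        (congrFun (congrFun hadj w) u).symm
      rw [h2]
      by_cases h : u = w <;> simp [h, eq_comm]
    simp only [hMdef, Matrix.map_apply, this]
  set ev : V → ℝ := hsym.eigenvalues with hev
  set U : Matrix V V ℝ := (hsym.eigenvectorUnitary : Matrix V V ℝ) with hU
  have hsp : M = U * diagonal ev * star U := by
    have := hsym.spectral_theorem
    rwa [RCLike.ofReal_real_eq_id, Function.id_comp] at this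
  have hQP : U * star U = 1 := (Matrix.mem_unitaryGroup_iff).mp hsym.eigenvectorUnitary.2
  have hPQ : star U * U = 1 := (Matrix.mem_unitaryGroup_iff').mp hsym.eigenvectorUnitary.2
  have hD : star U * M * U = diagonal ev := by
    rw [hsp]
    calc star U * (U * diagonal ev * star U) * U
        = (star U * U) * diagonal ev * (star U * U) := by
          simp only [mul_assoc]
      _ = diagonal ev := by rw [hPQ, one_mul, mul_one]
  have hDD : diagonal ev * diagonal ev
      = ((2:ℝ) * N) • diagonal ev + ((N:ℝ) - (N:ℝ)^2) • (1 : Matrix V V ℝ) := by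
    have h1 : diagonal ev * diagonal ev = star U * (M * M) * U := by
      rw [← hD]
      calc (star U * M * U) * (star U * M * U)
          = star U * (M * (U * star U) * M) * U := by simp only [mul_assoc]
        _ = star U * (M * M) * U := by rw [hQP, mul_one]
    rw [h1, hMM]
    rw [mul_add, add_mul, mul_smul_comm, mul_smul_comm, smul_mul_assoc, smul_mul_assoc,
      mul_one, hD, hPQ]
  -- each eigenvalue is lp or lm
  have hdich : ∀ i, ev i = lp ∨ ev i = lm := by
    intro i
    have h1 : ev i * ev i = 2 * N * ev i + ((N:ℝ) - (N:ℝ)^2) := by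
      have := congrFun (congrFun hDD i) i
      simp only [Matrix.diagonal_mul_diagonal, Matrix.diagonal_apply_eq, Matrix.add_apply,
        Matrix.smul_apply, Matrix.one_apply_eq, smul_eq_mul, mul_one] at this
      linarith [this]
    have h2 : (ev i - (N:ℝ))^2 = (Real.sqrt N)^2 := by
      have : (Real.sqrt N)^2 = (N:ℝ) := by rw [sq]; exact hsq
      rw [this]
      linear_combination h1
    rcases sq_eq_sq_iff_eq_or_eq_neg.mp h2 with h3 | h3
    · left; simp only [hlp]; linarith
    · right; simp only [hlm]; linarith
  -- counting
  set s : Finset V := Finset.univ.filter (fun i => ev i = lp) with hs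
  set a := s.card with ha
  set b := (Finset.univ.filter (fun i => ¬ ev i = lp)).card with hb
  have hab : a + b = v := by
    rw [ha, hb, hv]
    rw [Finset.card_filter_add_card_filter_not]
    exact Finset.card_univ
  have hmem2 : ∀ i ∈ Finset.univ.filter (fun i => ¬ ev i = lp), ev i = lm := by
    intro i hi
    rw [Finset.mem_filter] at hi
    exact (hdich i).resolve_left hi.2
  -- trace
  have htrM : M.trace = (N : ℝ) * v := by
    have hdiag : ∀ u, M u u = (N : ℝ) := by
      intro u
      have hadj0 : adinkraAdj nbr σ u u = 0 := by
        simp only [adinkraAdj, Matrix.of_apply]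
        rw [if_neg]
        rintro ⟨c, hc⟩
        exact hA.ne c u hc
      simp only [hMdef, Matrix.map_apply, hL, adinkraLap, Matrix.sub_apply, Matrix.smul_apply,
        Matrix.one_apply_eq, smul_eq_mul, mul_one, hadj0, sub_zero]
      simp
    rw [Matrix.trace]
    simp only [Matrix.diag_apply]
    rw [Finset.sum_congr rfl (fun u _ => hdiag u), Finset.sum_const, Finset.card_univ]
    simp [hv, mul_comm]
  have htr2 : (a : ℝ) * lp + (b : ℝ) * lm = (N : ℝ) * v := by
    rw [← htrM, hermitian_trace_eq hsym]
    rw [← Finset.sum_filter_add_sum_filter_not Finset.univ (fun i => ev i = lp)]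
    have e1 : ∑ i ∈ s, ev i = (a:ℝ) * lp := by
      rw [Finset.sum_congr rfl (fun i hi => (Finset.mem_filter.mp hi).2), Finset.sum_const,
        nsmul_eq_mul]
    have e2 : ∑ i ∈ Finset.univ.filter (fun i => ¬ ev i = lp), ev i = (b:ℝ) * lm := by
      rw [Finset.sum_congr rfl hmem2, Finset.sum_const, nsmul_eq_mul]
    rw [e1, e2]
  have habeq : a = b := by
    have h1 : ((a : ℝ) - b) * Real.sqrt N = 0 := by
      have hcast : (a : ℝ) + b = (v : ℝ) := by exact_mod_cast hab
      simp only [hlp, hlm] at htr2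
      linear_combination htr2 - (N : ℝ) * hcast
    rcases mul_eq_zero.mp h1 with h2 | h2
    · have : (a : ℝ) = b := by linarith
      exact_mod_cast this
    · exact absurd h2 hsqrtpos.ne'
  have hveven : Even v := by
    refine ⟨a, ?_⟩
    omega
  have hvhalf : v / 2 = a := by omega
  -- charpoly
  have hchar : M.charpoly = (X - C lp) ^ (v / 2) * (X - C lm) ^ (v / 2) := by
    rw [hermitian_charpoly_eq hsym]
    rw [← Finset.prod_filter_mul_prod_filter_not Finset.univ (fun i => ev i = lp)]
    have e1 : ∏ i ∈ s, (X - C (ev i)) = (X - C lp) ^ (v / 2) := by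
      rw [Finset.prod_congr rfl (fun i hi => by rw [(Finset.mem_filter.mp hi).2]),
        Finset.prod_const, ← ha, hvhalf]
    have e2 : ∏ i ∈ Finset.univ.filter (fun i => ¬ ev i = lp), (X - C (ev i))
        = (X - C lm) ^ (v / 2) := by
      rw [Finset.prod_congr rfl (fun i hi => by rw [hmem2 i hi]),
        Finset.prod_const, ← hb, hvhalf, habeq]
    rw [e1, e2]
  -- determinant over ℝ
  have hdetR : M.det = ((N:ℝ)^2 - N) ^ (v / 2) := by
    have h1 : M.det = ∏ i, ev i := by
      have := hsym.det_eq_prod_eigenvalues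
      simpa using this
    rw [h1, ← Finset.prod_filter_mul_prod_filter_not Finset.univ (fun i => ev i = lp)]
    have e1 : ∏ i ∈ s, ev i = lp ^ (v / 2) := by
      rw [Finset.prod_congr rfl (fun i hi => (Finset.mem_filter.mp hi).2),
        Finset.prod_const, ← ha, hvhalf]
    have e2 : ∏ i ∈ Finset.univ.filter (fun i => ¬ ev i = lp), ev i = lm ^ (v / 2) := by
      rw [Finset.prod_congr rfl hmem2, Finset.prod_const, ← hb, hvhalf, habeq]
    rw [e1, e2, ← mul_pow]
    congr 1
    simp only [hlp, hlm]
    linear_combination -hsq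
  -- determinant over ℤ
  have hdetZ : L.det = ((N : ℤ) ^ 2 - N) ^ (v / 2) := by
    have h1 : ((L.det : ℤ) : ℝ) = M.det :=
      RingHom.map_det (Int.castRingHom ℝ) L
    apply Int.cast_injective (α := ℝ)
    rw [h1, hdetR]
    push_cast
    ring
  refine ⟨hveven, hchar, hdetZ, ?_⟩
  -- cokernel
  have hdpos : (0 : ℤ) < (N : ℤ) ^ 2 - N := by
    have : (2 : ℤ) ≤ N := by exact_mod_cast hN
    nlinarith
  have hdet_ne : L.det ≠ 0 := by
    rw [hdetZ]
    positivity
  rw [card_coker_eq_natAbs_det L hdet_ne, hdetZ]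
  have hNN : ((N : ℤ) ^ 2 - N) = ((N ^ 2 - N : ℕ) : ℤ) := by
    have hle : N ≤ N ^ 2 := by nlinarith
    push_cast [hle]
    ring
  rw [hNN, ← Nat.cast_pow, Int.natAbs_natCast]
end

section
/- Let 𝒜 be an N-colored Adinkra with N ≥ 3, let uv and xy be two distinct edges of the same color with signs ε and ε' respectively. Then the monodromy pairing of the classes of e_u - ε e_v and e_x - ε' e_y in the critical group 𝒦(𝒜) is 0 in ℚ/ℤ, while ⟨[e_u - ε e_v], [e_u - ε e_v]⟩ = 2/N ≠ 0. -/
open Matrix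

namespace AdinkraAux

variable {V : Type} [Fintype V] [DecidableEq V] {N : ℕ}
  {nbr : Fin N → V → V} {σ : V → V → ℤ}

lemma adj_edge {a b : V} (h : ∃ c, nbr c a = b) : adinkraAdj nbr σ a b = σ a b := by
  show (if ∃ c, nbr c a = b then σ a b else 0) = σ a b
  exact if_pos h

lemma adj_nonedge {a b : V} (h : ¬ ∃ c, nbr c a = b) : adinkraAdj nbr σ a b = 0 := by
  show (if ∃ c, nbr c a = b then σ a b else 0) = 0
  exact if_neg h

lemma sign_ne (hA : IsAdinkra N nbr σ) (a b : V) : σ a b ≠ 0 := by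
  rcases hA.sign_unit a b with h | h <;> simp [h]

lemma color_inj (hA : IsAdinkra N nbr σ) {c c' : Fin N} {z : V}
    (h : nbr c z = nbr c' z) : c = c' := by
  by_contra hne; exact hA.distinct c c' z hne h

lemma swap_colors (hA : IsAdinkra N nbr σ) {c c' : Fin N} (hcc : c' ≠ c) {z w : V}
    (h : nbr c' (nbr c z) = w) : nbr c (nbr c' z) = w := by
  have h4 := hA.fourCycle c' c hcc z
  rw [h] at h4
  have h5 : nbr c w = nbr c' z := by
    have := congrArg (nbr c') h4
    rwa [hA.invol] at this
  have h6 := congrArg (nbr c) h5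
  rw [hA.invol] at h6
  exact h6.symm

lemma sign_cancel {a b : ℤ} (ha : a = 1 ∨ a = -1) (hab : a * b = -1) : a + b = 0 := by
  rcases ha with rfl | rfl <;> omega

lemma adj_sq (hA : IsAdinkra N nbr σ) :
    adinkraAdj nbr σ * adinkraAdj nbr σ = (N : ℤ) • (1 : Matrix V V ℤ) := by
  ext u w
  rw [Matrix.mul_apply]
  have hstep : ∀ z, adinkraAdj nbr σ u z * adinkraAdj nbr σ z w
      = ∑ c : Fin N, if nbr c u = z then σ u z * adinkraAdj nbr σ z w else 0 := by
    intro z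
    by_cases h : ∃ c, nbr c u = z
    · obtain ⟨c₀, hc₀⟩ := h
      rw [Finset.sum_eq_single c₀, if_pos hc₀, adj_edge ⟨c₀, hc₀⟩]
      · intro b _ hb
        rw [if_neg]
        intro hbz
        exact hb (color_inj hA (hbz.trans hc₀.symm))
      · intro h; exact absurd (Finset.mem_univ c₀) h
    · rw [adj_nonedge h, zero_mul]
      refine (Finset.sum_eq_zero fun c _ => ?_).symm
      rw [if_neg fun hc => h ⟨c, hc⟩]
  calc ∑ z, adinkraAdj nbr σ u z * adinkraAdj nbr σ z w
      = ∑ z, ∑ c : Fin N, if nbr c u = z then σ u z * adinkraAdj nbr σ z w else 0 :=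
        Finset.sum_congr rfl fun z _ => hstep z
    _ = ∑ c : Fin N, ∑ z, if nbr c u = z then σ u z * adinkraAdj nbr σ z w else 0 :=
        Finset.sum_comm
    _ = ∑ c : Fin N, σ u (nbr c u) * adinkraAdj nbr σ (nbr c u) w := by
        refine Finset.sum_congr rfl fun c _ => ?_
        simp
    _ = ((N : ℤ) • (1 : Matrix V V ℤ)) u w := ?_
  by_cases huw : u = w
  · subst huw
    have : ∀ c : Fin N, σ u (nbr c u) * adinkraAdj nbr σ (nbr c u) u = 1 := by
      intro c
      rw [adj_edge ⟨c, hA.invol c u⟩, hA.symm (nbr c u) u]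
      rcases hA.sign_unit u (nbr c u) with h | h <;> rw [h] <;> norm_num
    rw [Finset.sum_congr rfl fun c _ => this c]
    simp [Matrix.one_apply]
  · have : ∑ c : Fin N, σ u (nbr c u) * adinkraAdj nbr σ (nbr c u) w = 0 := by
      set F : Fin N → ℤ := fun c => σ u (nbr c u) * adinkraAdj nbr σ (nbr c u) w with hF
      set g : Fin N → Fin N := fun c =>
        if h : ∃ c', nbr c' (nbr c u) = w then h.choose else c with hg
      have hFne : ∀ c, F c ≠ 0 → ∃ c', nbr c' (nbr c u) = w := by
        intro c hc
        by_contra h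
        simp [hF, adj_nonedge h] at hc
      have hwit : ∀ c (h : ∃ c', nbr c' (nbr c u) = w), g c = h.choose := by
        intro c h; simp [hg, dif_pos h]
      -- basic: witness is never c itself
      have hwc : ∀ (c c' : Fin N), nbr c' (nbr c u) = w → c' ≠ c := by
        intro c c' h hec
        subst hec
        rw [hA.invol] at h
        exact huw h
      refine Finset.sum_ninvolution g ?_ ?_ (fun c => Finset.mem_univ _) ?_
      · -- F c + F (g c) = 0
        intro c
        by_cases h : ∃ c', nbr c' (nbr c u) = w
        · rw [hwit c h]
          set c' := h.choose with hc'def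
          have hc' : nbr c' (nbr c u) = w := h.choose_spec
          have hcc : c' ≠ c := hwc c c' hc'
          have hsw : nbr c (nbr c' u) = w := swap_colors hA hcc hc'
          have hodd := hA.oddSign c c' (Ne.symm hcc) u
          rw [hsw] at hodd
          have h2 : nbr c' w = nbr c u := by
            have h7 := congrArg (nbr c') hc'; rw [hA.invol] at h7; exact h7.symm
          rw [h2] at hodd
          -- hodd : σ u (nbr c' u) * σ (nbr c' u) w * σ w (nbr c u) * σ (nbr c u) u = -1
          rw [adj_edge ⟨c', hc'⟩, adj_edge ⟨c, hsw⟩]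
          have ha : σ u (nbr c u) * σ (nbr c u) w = 1 ∨
              σ u (nbr c u) * σ (nbr c u) w = -1 := by
            rcases hA.sign_unit u (nbr c u) with h1 | h1 <;>
              rcases hA.sign_unit (nbr c u) w with h3 | h3 <;> rw [h1, h3] <;> norm_num
          refine sign_cancel ha ?_
          rw [hA.symm (nbr c u) u, hA.symm w (nbr c u)] at hodd
          linear_combination hodd
        · have h0 : g c = c := by simp only [hg]; exact dif_neg h
          rw [h0, adj_nonedge h]
          ring
      · -- F c ≠ 0 → g c ≠ c
        intro c hc
        have h := hFne c hc
        rw [hwit c h]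
        exact hwc c h.choose h.choose_spec
      · -- involutive
        intro c
        by_cases h : ∃ c', nbr c' (nbr c u) = w
        · rw [hwit c h]
          set c' := h.choose with hc'def
          have hc' : nbr c' (nbr c u) = w := h.choose_spec
          have hcc : c' ≠ c := hwc c c' hc'
          have hsw : nbr c (nbr c' u) = w := swap_colors hA hcc hc'
          have h' : ∃ d, nbr d (nbr c' u) = w := ⟨c, hsw⟩
          rw [hwit c' h']
          exact color_inj hA (h'.choose_spec.trans hsw.symm)
        · have h0 : g c = c := by simp only [hg]; exact dif_neg h
          rw [h0, h0]
    rw [this]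
    simp [Matrix.one_apply, huw]

lemma pairA (hA : IsAdinkra N nbr σ) (c : Fin N) (u x : V) (hux : u ≠ x)
    (hux' : u ≠ nbr c x) :
    adinkraAdj nbr σ x u +
      σ u (nbr c u) * σ x (nbr c x) * adinkraAdj nbr σ (nbr c x) (nbr c u) = 0 := by
  by_cases h : ∃ c', nbr c' x = u
  · obtain ⟨c', hc'⟩ := h
    have hcc : c' ≠ c := by rintro rfl; exact hux' hc'.symm
    have hv : nbr c (nbr c' x) = nbr c u := by rw [hc']
    have hx' : nbr c' (nbr c x) = nbr c u := swap_colors hA hcc.symm hv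
    rw [adj_edge ⟨c', hc'⟩, adj_edge ⟨c', hx'⟩]
    have hodd := hA.oddSign c c' (Ne.symm hcc) x
    rw [hc'] at hodd
    have h2 : nbr c' (nbr c u) = nbr c x := by
      have h3 := congrArg (nbr c') hx'; rw [hA.invol] at h3; exact h3.symm
    rw [h2] at hodd
    refine sign_cancel (hA.sign_unit x u) ?_
    rw [hA.symm (nbr c u) (nbr c x), hA.symm (nbr c x) x] at hodd
    linear_combination hodd
  · rw [adj_nonedge h]
    have h2 : ¬ ∃ d, nbr d (nbr c x) = nbr c u := by
      rintro ⟨d, hd⟩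
      have hdc : d ≠ c := by
        rintro rfl
        rw [hA.invol] at hd
        exact hux' (show nbr d x = u by rw [hd, hA.invol]).symm
      have h3 : nbr c (nbr d x) = nbr c u := swap_colors hA hdc hd
      have h4 : nbr d x = u := by
        have h5 := congrArg (nbr c) h3; rwa [hA.invol, hA.invol] at h5
      exact h ⟨d, h4⟩
    rw [adj_nonedge h2]; ring

lemma pairB (hA : IsAdinkra N nbr σ) (c : Fin N) (u x : V) (hux : u ≠ x)
    (hux' : u ≠ nbr c x) :
    σ u (nbr c u) * adinkraAdj nbr σ x (nbr c u) +
      σ x (nbr c x) * adinkraAdj nbr σ (nbr c x) u = 0 := by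
  by_cases h : ∃ c', nbr c' x = nbr c u
  · obtain ⟨c', hc'⟩ := h
    have hcc : c' ≠ c := by
      rintro rfl
      have h6 : x = u := by
        have := congrArg (nbr c') hc'; rwa [hA.invol, hA.invol] at this
      exact hux h6.symm
    have h4 := hA.fourCycle c c' (Ne.symm hcc) x
    rw [hc', hA.invol] at h4
    have hx' : nbr c' u = nbr c x := by
      have h5 := congrArg (nbr c) h4; rwa [hA.invol] at h5
    have hx'' : nbr c' (nbr c x) = u := by
      have h5 := congrArg (nbr c') hx'; rw [hA.invol] at h5; exact h5.symm
    rw [adj_edge ⟨c', hc'⟩, adj_edge ⟨c', hx''⟩]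
    have hodd := hA.oddSign c c' (Ne.symm hcc) x
    rw [hc', hA.invol, hx'] at hodd
    have ha : σ u (nbr c u) * σ x (nbr c u) = 1 ∨ σ u (nbr c u) * σ x (nbr c u) = -1 := by
      rcases hA.sign_unit u (nbr c u) with h1 | h1 <;>
        rcases hA.sign_unit x (nbr c u) with h3 | h3 <;> rw [h1, h3] <;> norm_num
    refine sign_cancel ha ?_
    rw [hA.symm (nbr c u) u, hA.symm u (nbr c x), hA.symm (nbr c x) x] at hodd
    linear_combination hodd
  · rw [adj_nonedge h]
    have h2 : ¬ ∃ d, nbr d (nbr c x) = u := by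
      rintro ⟨d, hd⟩
      have hdc : d ≠ c := by
        rintro rfl
        rw [hA.invol] at hd
        exact hux hd.symm
      have h3 : nbr c (nbr d x) = u := swap_colors hA hdc hd
      have h4 : nbr d x = nbr c u := by
        have h5 := congrArg (nbr c) h3; rwa [hA.invol] at h5
      exact h ⟨d, h4⟩
    rw [adj_nonedge h2]; ring


end AdinkraAux

open AdinkraAux

/-- Let `𝒜` be an `N`-colored Adinkra with `N ≥ 3`, and let `uv` and `xy` be two
distinct edges of the same color `c`, with signs `ε = σ(uv)` and `ε' = σ(xy)`.
Then the monodromy pairing of the classes of `e_u - ε e_v` and `e_x - ε' e_y` in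
the critical group is `0` in `ℚ/ℤ`, while `⟨[e_u - ε e_v], [e_u - ε e_v]⟩ = 2/N ≠ 0`. -/
theorem adinkra_monochromatic_edges_orthonormal {V : Type} [Fintype V] [DecidableEq V]
    {N : ℕ} (hN : 3 ≤ N) (nbr : Fin N → V → V) (σ : V → V → ℤ)
    (hA : IsAdinkra N nbr σ) (c : Fin N) (u x : V)
    (hdistinct : u ≠ x ∧ u ≠ nbr c x) :
    (∀ (m : ℤ) (f : V → ℤ), 0 < m →
        (adinkraLap nbr σ).mulVec f =
          m • (Pi.single u 1 - σ u (nbr c u) • Pi.single (nbr c u) 1) →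
        (∃ z : ℤ,
            ((f ⬝ᵥ (Pi.single x 1 - σ x (nbr c x) • Pi.single (nbr c x) 1) : ℤ) : ℚ) / m
              = z) ∧
          ∃ z : ℤ,
            ((f ⬝ᵥ (Pi.single u 1 - σ u (nbr c u) • Pi.single (nbr c u) 1) : ℤ) : ℚ) / m
              = 2 / (N : ℚ) + z) ∧
      ¬∃ z : ℤ, (2 : ℚ) / (N : ℚ) = z := by
  obtain ⟨hux, hux'⟩ := hdistinct
  have hNQ : (N : ℚ) ≠ 0 := Nat.cast_ne_zero.mpr (by omega)
  constructor
  · intro m f hm hf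
    set A := adinkraAdj nbr σ with hAdef
    set v := nbr c u with hv
    set x' := nbr c x with hx'
    set ε := σ u v with hε
    set ε' := σ x x' with hε'
    set y : V → ℤ := Pi.single u 1 - ε • Pi.single v 1 with hydef
    set y' : V → ℤ := Pi.single x 1 - ε' • Pi.single x' 1 with hy'def
    -- vertex distinctions
    have hvu : v ≠ u := hA.ne c u
    have hvx : v ≠ x := by
      intro e
      apply hux'
      have h1 := congrArg (nbr c) e
      rw [hv, hA.invol] at h1
      exact h1
    have hvx' : v ≠ x' := by
      intro e
      apply hux
      have h1 := congrArg (nbr c) e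
      rwa [hv, hx', hA.invol, hA.invol] at h1
    have hx'x : x' ≠ x := hA.ne c x
    have hx'u : x' ≠ u := Ne.symm hux'
    -- dot product helper
    have hdot : ∀ (g : V → ℤ) (a b : V) (e : ℤ),
        g ⬝ᵥ (Pi.single a 1 - e • Pi.single b 1) = g a - e * g b := by
      intro g a b e
      rw [dotProduct_sub, dotProduct_smul, dotProduct_single, dotProduct_single,
        smul_eq_mul, mul_one, mul_one]
    -- values of y, y'
    have hyval : ∀ w, y w = (if w = u then 1 else 0) - ε * (if w = v then 1 else 0) := by
      intro w; simp [hydef, Pi.single_apply]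
    have hy'val : ∀ w, y' w = (if w = x then 1 else 0) - ε' * (if w = x' then 1 else 0) := by
      intro w; simp [hy'def, Pi.single_apply]
    have hyu : y u = 1 := by rw [hyval]; simp [Ne.symm hvu]
    have hyv : y v = -ε := by rw [hyval]; simp [hvu]
    have hyx : y x = 0 := by rw [hyval]; simp [Ne.symm hux, Ne.symm hvx]
    have hyx' : y x' = 0 := by rw [hyval]; simp [hx'u, Ne.symm hvx']
    -- sign facts
    have hε2 : ε * ε = 1 := by
      rcases hA.sign_unit u v with h | h <;> rw [hε, h] <;> norm_num
    -- adjacency values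
    have hAuu : A u u = 0 := adj_nonedge fun ⟨d, hd⟩ => hA.ne d u hd
    have hAvv : A v v = 0 := adj_nonedge fun ⟨d, hd⟩ => hA.ne d v hd
    have hAuv : A u v = ε := adj_edge ⟨c, hv.symm⟩
    have hAvu : A v u = ε := by
      rw [hAdef, adj_edge ⟨c, by rw [hv, hA.invol]⟩, hε, hA.symm]
    -- Laplacian expansion
    have hLf : ∀ g : V → ℤ, adinkraLap nbr σ *ᵥ g = (N : ℤ) • g - A *ᵥ g := by
      intro g
      show ((N : ℤ) • (1 : Matrix V V ℤ) - adinkraAdj nbr σ) *ᵥ g = _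
      rw [Matrix.sub_mulVec, Matrix.smul_mulVec, Matrix.one_mulVec, hAdef]
    have h1 : (N : ℤ) • f - A *ᵥ f = m • y := by rw [← hLf]; exact hf
    have h2 : (N : ℤ) • (A *ᵥ f) - (N : ℤ) • f = m • (A *ᵥ y) := by
      have hAA : A *ᵥ (A *ᵥ f) = (N : ℤ) • f := by
        rw [Matrix.mulVec_mulVec, hAdef, adj_sq hA, Matrix.smul_mulVec,
          Matrix.one_mulVec]
      have h3 : A *ᵥ ((N : ℤ) • f - A *ᵥ f) = A *ᵥ (m • y) := by rw [h1]
      rwa [Matrix.mulVec_sub, Matrix.mulVec_smul, Matrix.mulVec_smul, hAA] at h3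
    have hkey : ∀ w, ((N : ℤ) ^ 2 - N) * f w = m * ((N : ℤ) * y w + (A *ᵥ y) w) := by
      intro w
      have e1 := congrFun h1 w
      have e2 := congrFun h2 w
      simp only [Pi.sub_apply, Pi.smul_apply, smul_eq_mul] at e1 e2
      linear_combination (N : ℤ) * e1 + e2
    have hdp : ∀ t : V → ℤ, ((N : ℤ) ^ 2 - N) * (f ⬝ᵥ t)
        = m * ((N : ℤ) * (y ⬝ᵥ t) + (A *ᵥ y) ⬝ᵥ t) := by
      intro t
      simp only [dotProduct, Finset.mul_sum, ← Finset.sum_add_distrib]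
      refine Finset.sum_congr rfl fun w _ => ?_
      linear_combination t w * hkey w
    -- values of A *ᵥ y
    have hAyw : ∀ w, (A *ᵥ y) w = A w u - ε * A w v := fun w => hdot (A w) u v ε
    -- dot products with y'
    have hyy' : y ⬝ᵥ y' = 0 := by
      have hd := hdot y x x' ε'
      rw [← hy'def] at hd
      rw [hd, hyx, hyx']; ring
    have hAyy' : (A *ᵥ y) ⬝ᵥ y' = 0 := by
      have hd := hdot (A *ᵥ y) x x' ε'
      rw [← hy'def] at hd
      rw [hd, hAyw, hAyw]
      have hp1 := pairA hA c u x hux hux'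
      have hp2 := pairB hA c u x hux hux'
      rw [← hv, ← hx', ← hε, ← hε', ← hAdef] at hp1 hp2
      linear_combination hp1 - hp2
    have hyy : y ⬝ᵥ y = 2 := by
      have hd := hdot y u v ε
      rw [← hydef] at hd
      rw [hd, hyu, hyv]
      linear_combination hε2
    have hAyy : (A *ᵥ y) ⬝ᵥ y = -2 := by
      have hd := hdot (A *ᵥ y) u v ε
      rw [← hydef] at hd
      rw [hd, hAyw, hAyw, hAuu, hAuv, hAvu, hAvv]
      linear_combination (-2 : ℤ) * hε2
    -- conclude
    have hNz : (0 : ℤ) < (N : ℤ) ^ 2 - N := by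
      have h3 : (3 : ℤ) ≤ (N : ℤ) := by exact_mod_cast hN
      nlinarith
    have hfy' : f ⬝ᵥ y' = 0 := by
      have h5 := hdp y'
      rw [hyy', hAyy'] at h5
      simp only [mul_zero, add_zero, zero_add] at h5
      rcases mul_eq_zero.mp (by linarith [h5] : ((N : ℤ) ^ 2 - N) * (f ⬝ᵥ y') = 0) with
        h6 | h6
      · exact absurd h6 (by omega)
      · exact h6
    have hfy : (N : ℤ) * (f ⬝ᵥ y) = 2 * m := by
      have h5 := hdp y
      rw [hyy, hAyy] at h5
      have hN1 : (N : ℤ) - 1 ≠ 0 := by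
        have h3 : (3 : ℤ) ≤ (N : ℤ) := by exact_mod_cast hN
        omega
      refine mul_left_cancel₀ hN1 ?_
      linear_combination h5
    have hmQ : (m : ℚ) ≠ 0 := by exact_mod_cast hm.ne'
    constructor
    · exact ⟨0, by rw [hfy']; simp⟩
    · refine ⟨0, ?_⟩
      have h7 : ((N : ℚ)) * ((f ⬝ᵥ y : ℤ) : ℚ) = 2 * (m : ℚ) := by exact_mod_cast hfy
      push_cast
      rw [add_zero, div_eq_div_iff hmQ hNQ]
      linear_combination h7
  · rintro ⟨z, hz⟩
    have h0 : (0 : ℚ) < 2 / (N : ℚ) := by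
      apply div_pos (by norm_num)
      have : (3 : ℚ) ≤ (N : ℚ) := by exact_mod_cast hN
      linarith
    have hN3 : (3 : ℚ) ≤ (N : ℚ) := by exact_mod_cast hN
    have h1 : 2 / (N : ℚ) < 1 := by
      rw [div_lt_one (by linarith : (0:ℚ) < (N:ℚ))]
      linarith
    rw [hz] at h0 h1
    have h2 : 0 < z := by exact_mod_cast h0
    have h3 : z < 1 := by exact_mod_cast h1
    omega
end

section
/- Let G be a finite abelian group equipped with a symmetric bilinear pairing ⟨·,·⟩: G × G → ℚ/ℤ. Suppose g₁, …, g_l ∈ G satisfy ⟨g_i, g_j⟩ = 0 for i ≠ j and ⟨g_i, g_i⟩ = μ/η with gcd(μ, η) = 1, μ, η positive integers. Then G contains a subgroup isomorphic to (ℤ/ηℤ)^l. -/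
open Module

/-- Let `G` be a finite abelian group with a symmetric bilinear pairing into `ℚ/ℤ`.
If `g₁, …, g_l ∈ G` pair to `0` with each other and each satisfies
`⟨g_i, g_i⟩ = μ/η` with `gcd(μ, η) = 1`, then `G` contains a subgroup isomorphic
to `(ℤ/ηℤ)^l`. -/
theorem orthonormal_family_gives_subgroup
    {G : Type} [AddCommGroup G] [Fintype G]
    (B : G →+ G →+ AddCircle (1 : ℚ)) (hsymm : ∀ a b, B a b = B b a)
    (l : ℕ) (g : Fin l → G)
    (horth : ∀ i j, i ≠ j → B (g i) (g j) = 0)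
    (μ η : ℕ) (hμ : 0 < μ) (hη : 0 < η) (hcop : Nat.gcd μ η = 1)
    (hdiag : ∀ i, B (g i) (g i) = ((μ : ℚ) / (η : ℚ) : ℚ)) :
    ∃ H : AddSubgroup G, Nonempty (H ≃+ (Fin l → ZMod η)) := by
  classical
  haveI : NeZero η := ⟨hη.ne'⟩
  -- the linear map sending coefficients to combinations of the `g i`
  let f : (Fin l → ℤ) →ₗ[ℤ] G :=
    { toFun := fun c => ∑ i, c i • g i
      map_add' := by
        intro a b
        simp [add_smul, Finset.sum_add_distrib]
      map_smul' := by
        intro m a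
        simp [mul_smul, Finset.smul_sum] }
  have hf : ∀ c : Fin l → ℤ, f c = ∑ i, c i • g i := fun _ => rfl
  -- the order of `μ/η` in `ℚ/ℤ` is `η`
  have torder : addOrderOf (((μ : ℚ) / (η : ℚ) : ℚ) : AddCircle (1 : ℚ)) = η := by
    have := AddCircle.addOrderOf_div_of_gcd_eq_one (p := (1 : ℚ)) (m := μ) hη hcop
    simpa using this
  -- key step: every element of `ker f` has all coordinates divisible by `η`
  have key : ∀ y : Fin l → ℤ, f y = 0 → ∀ i, (η : ℤ) ∣ y i := by
    intro y hy i
    have h1 : B (f y) (g i)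
        = y i • (((μ : ℚ) / (η : ℚ) : ℚ) : AddCircle (1 : ℚ)) := by
      rw [hf, map_sum, AddMonoidHom.finset_sum_apply,
        Finset.sum_eq_single i]
      · rw [hsymm, map_zsmul, hsymm, hdiag i]
      · intro j _ hj
        rw [hsymm, map_zsmul, hsymm, horth j i hj, smul_zero]
      · intro h; exact absurd (Finset.mem_univ i) h
    rw [hy] at h1
    simp only [map_zero, AddMonoidHom.zero_apply] at h1
    have h2 : y i • (((μ : ℚ) / (η : ℚ) : ℚ) : AddCircle (1 : ℚ)) = 0 := h1.symm
    have := addOrderOf_dvd_iff_zsmul_eq_zero.mpr h2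
    rwa [torder] at this
  -- `L'` is the set of `y` with `η • y ∈ ker f`
  set L' : Submodule ℤ (Fin l → ℤ) := LinearMap.ker ((η : ℤ) • f) with hL'
  have memL' : ∀ y : Fin l → ℤ, y ∈ L' ↔ f ((η : ℤ) • y) = 0 := by
    intro y
    rw [hL', LinearMap.mem_ker, LinearMap.smul_apply, ← map_smul]
  -- `L'` has finite index, so it is free of rank `l`
  have hcard : ∀ x : G, (Fintype.card G : ℤ) • x = 0 := by
    intro x
    rw [natCast_zsmul]
    exact card_nsmul_eq_zero
  let jmap : (Fin l → ℤ) →ₗ[ℤ] L' :=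
    LinearMap.codRestrict L' ((Fintype.card G : ℤ) • LinearMap.id)
      (by
        intro y
        rw [memL', LinearMap.smul_apply, LinearMap.id_apply, map_smul, map_smul,
          smul_comm, hcard])
  have hjinj : Function.Injective jmap := by
    intro a b hab
    have h := congrArg (Subtype.val) hab
    simp only [jmap, LinearMap.codRestrict_apply, LinearMap.smul_apply,
      LinearMap.id_apply] at h
    exact smul_right_injective (Fin l → ℤ)
      (by exact_mod_cast Fintype.card_ne_zero) h
  have hfr : finrank ℤ L' = l := by
    refine le_antisymm ?_ ?_
    · simpa [Module.finrank_pi] using L'.finrank_le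
    · have := LinearMap.finrank_le_finrank_of_injective hjinj
      simpa [Module.finrank_pi] using this
  let b : Basis (Fin l) ℤ L' := Module.finBasisOfFinrankEq ℤ L' hfr
  -- each `η • f (b i)` vanishes
  have hbzero : ∀ i : Fin l, ((η : ℕ) : ℤ) • f ((b i : Fin l → ℤ)) = 0 := by
    intro i
    have := (memL' (b i : Fin l → ℤ)).mp (b i).2
    rw [map_smul] at this
    exact_mod_cast this
  -- build the homomorphism `(ZMod η)^l →+ G`
  let F : Fin l → (ZMod η →+ G) := fun i =>
    ZMod.lift η ⟨zmultiplesHom G (f ((b i : Fin l → ℤ))), hbzero i⟩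
  let χ : (Fin l → ZMod η) →+ G :=
    ∑ i : Fin l, (F i).comp (Pi.evalAddMonoidHom (fun _ => ZMod η) i)
  have hχ : ∀ c : Fin l → ZMod η, χ c = ∑ i, F i (c i) := by
    intro c
    simp [χ, AddMonoidHom.finset_sum_apply]
  -- injectivity
  have hinj : Function.Injective χ := by
    rw [injective_iff_map_eq_zero]
    intro c hc
    set n : Fin l → ℤ := fun i => ((c i).val : ℤ) with hn
    have hcn : ∀ i, ((n i : ℤ) : ZMod η) = c i := by
      intro i
      simp [hn, ZMod.natCast_val, ZMod.cast_id]
    set w : L' := ∑ i, n i • b i with hw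
    have hwcoe : (w : Fin l → ℤ) = ∑ i, n i • (b i : Fin l → ℤ) := by
      simp [hw]
    have hfw : f (w : Fin l → ℤ) = 0 := by
      rw [hwcoe, map_sum]
      rw [hχ] at hc
      rw [← hc]
      refine Finset.sum_congr rfl ?_
      intro i _
      rw [← hcn i, map_smul]
      simp [F, ZMod.lift_coe, zmultiplesHom_apply]
    -- divide `w` by `η`
    set z : Fin l → ℤ := fun i => (w : Fin l → ℤ) i / (η : ℤ) with hzdef
    have hz : (η : ℤ) • z = (w : Fin l → ℤ) := by
      funext i
      have := key _ hfw i
      simp only [Pi.smul_apply, smul_eq_mul, hzdef]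
      exact Int.mul_ediv_cancel' this
    have hzmem : z ∈ L' := by
      rw [memL', hz, hfw]
    have hwz : w = (η : ℤ) • (⟨z, hzmem⟩ : L') := by
      apply Subtype.ext
      rw [SetLike.val_smul, hz]
    -- compare coordinates via the basis
    have hrepr : b.equivFun w = n := by
      rw [hw]
      have : (∑ i, n i • b i) = b.equivFun.symm n := by
        rw [Basis.equivFun_symm_apply]
      rw [this, LinearEquiv.apply_symm_apply]
    have hdvd : ∀ i, (η : ℤ) ∣ n i := by
      intro i
      rw [← hrepr]
      rw [hwz, map_smul]
      exact ⟨b.equivFun ⟨z, hzmem⟩ i, rfl⟩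
    funext i
    rw [Pi.zero_apply, ← hcn i, ZMod.intCast_zmod_eq_zero_iff_dvd]
    exact_mod_cast hdvd i
  exact ⟨χ.range, ⟨(AddMonoidHom.ofInjective hinj).symm⟩⟩
end

section
/- Let G be a finite abelian group with invariant factors f₁ | f₂ | ⋯ | f_v. If G contains a subgroup isomorphic to (ℤ/ηℤ)^l, then η divides f_i for every i > v - l. -/
/-!
If `A` embeds in `B` and `n ∣ m`, then `A[m] / A[n]` embeds in `B[m] / B[n]`. Take
`n = gcd(f_i, η)` and `η = n k`. For `A = (ℤ/η)^l` the quotient has order `k^l`. For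
`B = ⊕ ℤ/f_j`, a factor with `j ≤ i` contributes nothing (its `η`-torsion is already `n`-torsion,
as `f_j ∣ f_i`), and each of the at most `l - 1` factors with `j > i` contributes at most `k`.
Hence `k^l ≤ k^(l-1)`, so `k = 1` and `η = n ∣ f_i`.
-/

open AddSubgroup Function

section Torsion

variable {A B : Type*} [AddCommGroup A] [AddCommGroup B]

lemma torsionBy_natCast_eq_ker_nsmul (n : ℕ) : A[n] = (nsmulAddMonoidHom n : A →+ A).ker := by
  ext
  simp

lemma torsionBy_mono {m n : ℕ} (h : n ∣ m) : A[n] ≤ A[m] :=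
  Submodule.torsionBy_le_torsionBy_of_dvd _ _ (Int.natCast_dvd_natCast.2 h)

lemma comap_torsionBy_of_injective {ψ : A →+ B} (hψ : Injective ψ) (n : ℕ) :
    B[n].comap ψ = A[n] := by
  ext x
  rw [mem_comap, torsionBy.nsmul_iff, torsionBy.nsmul_iff, ← map_nsmul]
  exact (injective_iff_map_eq_zero' ψ).1 hψ _

lemma card_torsionBy_eq_card_mul_relIndex {m n : ℕ} (h : n ∣ m) :
    Nat.card A[m] = Nat.card A[n] * A[n].relIndex A[m] := by
  rw [← relIndex_bot_left, ← relIndex_bot_left,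
    relIndex_mul_relIndex _ _ _ bot_le (torsionBy_mono h)]

lemma card_torsionBy_mul_le [Finite B] {ψ : A →+ B} (hψ : Injective ψ) {m n : ℕ} (h : n ∣ m) :
    Nat.card A[m] * Nat.card B[n] ≤ Nat.card B[m] * Nat.card A[n] := by
  have hrel : A[n].relIndex A[m] ≤ B[n].relIndex B[m] := by
    rw [← comap_torsionBy_of_injective hψ, relIndex_comap]
    exact relIndex_le_of_le_right (map_le_iff_le_comap.2 (comap_torsionBy_of_injective hψ m).ge)
      FiniteIndex.index_ne_zero
  rw [card_torsionBy_eq_card_mul_relIndex h, card_torsionBy_eq_card_mul_relIndex h]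
  calc Nat.card A[n] * A[n].relIndex A[m] * Nat.card B[n]
      ≤ Nat.card A[n] * B[n].relIndex B[m] * Nat.card B[n] := by gcongr
    _ = Nat.card B[n] * B[n].relIndex B[m] * Nat.card A[n] := by ring

lemma card_torsionBy_pi {ι : Type*} [Fintype ι] (M : ι → Type*) [∀ i, AddCommGroup (M i)]
    (n : ℕ) : Nat.card (∀ i, M i)[n] = ∏ i, Nat.card (M i)[n] := by
  rw [← Nat.card_pi]
  exact Nat.card_congr ((Equiv.subtypeEquivRight fun x => by
    simp [funext_iff]).trans Equiv.subtypePiEquivPi)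

lemma card_torsionBy_zmod (N : ℕ) [NeZero N] (n : ℕ) : Nat.card (ZMod N)[n] = N.gcd n := by
  rw [torsionBy_natCast_eq_ker_nsmul, IsAddCyclic.card_nsmulAddMonoidHom_ker, Nat.card_zmod]

end Torsion

lemma prod_gcd_mul_dvd_pow_mul_prod_gcd {v : ℕ} {f : Fin v → ℕ}
    (hchain : ∀ i j : Fin v, i ≤ j → f i ∣ f j) {i : Fin v} {n k : ℕ}
    (hn : (f i).gcd (n * k) ∣ n) :
    ∏ j, (f j).gcd (n * k) ∣ k ^ (v - 1 - i) * ∏ j, (f j).gcd n := by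
  rw [← Fin.card_Ioi, ← Finset.prod_const, ← Fintype.prod_ite_mem (Finset.Ioi i),
    ← Finset.prod_mul_distrib]
  refine Finset.prod_dvd_prod_of_dvd _ _ fun j _ => ?_
  split_ifs with hj
  · rw [mul_comm k]
    exact (Nat.gcd_mul_right_dvd_mul_gcd _ _ _).trans
      (Nat.mul_dvd_mul_left _ (Nat.gcd_dvd_right _ _))
  · rw [one_mul]
    have hji : j ≤ i := by simpa using hj
    have hgcd : (f j).gcd (n * k) ∣ (f i).gcd (n * k) :=
      Nat.dvd_gcd ((Nat.gcd_dvd_left _ _).trans (hchain j i hji)) (Nat.gcd_dvd_right _ _)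
    exact Nat.dvd_gcd (Nat.gcd_dvd_left _ _) (hgcd.trans hn)

lemma dvd_of_pow_mul_prod_gcd_le {v : ℕ} {f : Fin v → ℕ} (hpos : ∀ i, 0 < f i)
    (hchain : ∀ i j : Fin v, i ≤ j → f i ∣ f j) {η l : ℕ} (hη : 0 < η) {i : Fin v}
    (hi : v - l ≤ (i : ℕ))
    (h : η ^ l * ∏ j, (f j).gcd ((f i).gcd η) ≤ (∏ j, (f j).gcd η) * ((f i).gcd η) ^ l) :
    η ∣ f i := by
  set n := (f i).gcd η
  set P := ∏ j, (f j).gcd n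
  obtain ⟨k, hk⟩ : n ∣ η := Nat.gcd_dvd_right _ _
  have hprod := prod_gcd_mul_dvd_pow_mul_prod_gcd hchain (i := i) (n := n) (k := k) (hk ▸ dvd_rfl)
  rw [← hk] at hprod
  have hk0 : 0 < k := Nat.pos_of_mul_pos_left (hk ▸ hη)
  have hP : 0 < P := Finset.prod_pos fun j _ => Nat.gcd_pos_of_pos_left _ (hpos j)
  have hkl : k ^ l * (n ^ l * P) ≤ k ^ (l - 1) * (n ^ l * P) :=
    calc k ^ l * (n ^ l * P) = η ^ l * P := by rw [hk]; ring
      _ ≤ (∏ j, (f j).gcd η) * n ^ l := h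
      _ ≤ k ^ (v - 1 - i) * P * n ^ l := by
        gcongr; exact Nat.le_of_dvd (by positivity) hprod
      _ ≤ k ^ (l - 1) * P * n ^ l :=
        Nat.mul_le_mul_right _ (Nat.mul_le_mul_right _
          (Nat.pow_le_pow_right hk0 (by have := i.isLt; omega)))
      _ = k ^ (l - 1) * (n ^ l * P) := by ring
  have hk1 : k ≤ 1 := by
    by_contra! hk1
    have hlt := Nat.pow_lt_pow_right hk1 (show l - 1 < l by have := i.isLt; omega)
    exact (Nat.le_of_mul_le_mul_right hkl (by positivity)).not_gt hlt
  rw [hk, show k = 1 by omega, mul_one]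
  exact Nat.gcd_dvd_left _ _

theorem subgroup_power_divides_invariant_factors_general
    {G : Type} [AddCommGroup G]
    (v : ℕ) (f : Fin v → ℕ) (hpos : ∀ i, 0 < f i)
    (hchain : ∀ i j : Fin v, i ≤ j → f i ∣ f j)
    (hiso : Nonempty (G ≃+ ((i : Fin v) → ZMod (f i))))
    (η l : ℕ) (hη : 0 < η)
    (hsub : ∃ H : AddSubgroup G, Nonempty (H ≃+ (Fin l → ZMod η))) :
    ∀ i : Fin v, v - l ≤ (i : ℕ) → η ∣ f i := by
  intro i hi
  obtain ⟨e⟩ := hiso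
  obtain ⟨H, ⟨eH⟩⟩ := hsub
  have : ∀ j, NeZero (f j) := fun j => ⟨(hpos j).ne'⟩
  have : NeZero η := ⟨hη.ne'⟩
  let ψ : (Fin l → ZMod η) →+ ((j : Fin v) → ZMod (f j)) :=
    e.toAddMonoidHom.comp (H.subtype.comp eH.symm.toAddMonoidHom)
  have hψ : Injective ψ := e.injective.comp (H.subtype_injective.comp eH.symm.injective)
  have hdvd : (f i).gcd η ∣ η := Nat.gcd_dvd_right _ _
  have hcard := card_torsionBy_mul_le hψ hdvd
  simp only [card_torsionBy_pi, card_torsionBy_zmod, Finset.prod_const, Finset.card_univ,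
    Fintype.card_fin, Nat.gcd_self, Nat.gcd_eq_right hdvd] at hcard
  exact dvd_of_pow_mul_prod_gcd_le hpos hchain hη hi hcard

/-- Let `G` be a finite abelian group with invariant factors `f₁ ∣ f₂ ∣ ⋯ ∣ f_v`.
If `G` contains a subgroup isomorphic to `(ℤ/ηℤ)^l`, then `η ∣ f_i` for every
`i > v - l`. -/
theorem subgroup_power_divides_invariant_factors
    {G : Type} [AddCommGroup G] [Fintype G]
    (v : ℕ) (f : Fin v → ℕ) (hpos : ∀ i, 0 < f i)
    (hchain : ∀ i j : Fin v, i ≤ j → f i ∣ f j)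
    (hiso : Nonempty (G ≃+ ((i : Fin v) → ZMod (f i))))
    (η l : ℕ) (hη : 0 < η) (hl : l ≤ v)
    (hsub : ∃ H : AddSubgroup G, Nonempty (H ≃+ (Fin l → ZMod η))) :
    ∀ i : Fin v, v - l ≤ (i : ℕ) → η ∣ f i :=
  subgroup_power_divides_invariant_factors_general v f hpos hchain hiso η l hη hsub
end
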